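/- Let m_iso(θ₁) = 4 f(θ₁) + 4 f(π/2 − θ₁) for θ₁ ∈ (0, π/2), where f(θ) = (θ/π) log(2 sin θ) + Λ(θ)/π. Then m_iso has a critical point at θ₁ = π/4 with second derivative 8/π − 4 < 0 there, so θ₁ = π/4 is a strict local maximum. -/

import Mathlib

/-- The Lobachevsky function `Λ(x) = −∫₀ˣ log(2 sin t) dt`. -/
noncomputable def lobachevsky (x : ℝ) : ℝ :=
  -∫ t in (0:ℝ)..x, Real.log (2 * Real.sin t)

/-- `f(θ) = (θ/π) log(2 sin θ) + Λ(θ)/π`. -/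
noncomputable def edgeContribution (θ : ℝ) : ℝ :=
  θ / Real.pi * Real.log (2 * Real.sin θ) + lobachevsky θ / Real.pi

/-- The isoradial Mahler measure of the `F₀` dimer with rhombus angles
`θ₁` and `π/2 − θ₁`: `m_iso(θ₁) = 4 f(θ₁) + 4 f(π/2 − θ₁)`. -/
noncomputable def mIsoF0 (θ₁ : ℝ) : ℝ :=
  4 * edgeContribution θ₁ + 4 * edgeContribution (Real.pi / 2 - θ₁)

/-!
Since `Λ' = -log (2 sin)`, the logarithmic terms cancel in `f'`, leaving
`f'(θ) = (θ/π) cot θ`. Hence `m_iso'(θ) = (4θ/π) cot θ + ((4θ - 2π)/π) tan θ`, which vanishes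
at `π/4`; differentiating once more and using `cot (π/4) = tan (π/4) = 1` and
`sin² (π/4) = cos² (π/4) = 1/2` gives `8/π - 4`. Strictness of the maximum comes from the sign
change of `m_iso'` at `π/4`: by the mean value theorem `m_iso` is strictly increasing just to the
left of `π/4` and strictly decreasing just to the right.
-/

open Real Filter Topology Set

lemma intervalIntegrable_log_two_mul_sin (a b : ℝ) :
    IntervalIntegrable (fun t => log (2 * sin t)) MeasureTheory.volume a b :=
  ((analyticOnNhd_const (v := (2 : ℝ))).mul analyticOnNhd_sin).meromorphicOn
    |>.intervalIntegrable_log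

lemma hasDerivAt_lobachevsky {x : ℝ} (hx : sin x ≠ 0) :
    HasDerivAt lobachevsky (-log (2 * sin x)) x := by
  have hmeas : Measurable fun t => log (2 * sin t) := by fun_prop
  have hcont : ContinuousAt (fun t => log (2 * sin t)) x := by fun_prop (disch := positivity)
  exact (intervalIntegral.integral_hasDerivAt_right (intervalIntegrable_log_two_mul_sin 0 x)
    hmeas.stronglyMeasurable.stronglyMeasurableAtFilter hcont).neg

lemma hasDerivAt_edgeContribution {x : ℝ} (hx : sin x ≠ 0) :
    HasDerivAt edgeContribution (x / π * cot x) x := by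
  have hlog : HasDerivAt (fun y => log (2 * sin y)) (2 * cos x / (2 * sin x)) x :=
    ((hasDerivAt_sin x).const_mul 2).log (mul_ne_zero two_ne_zero hx)
  refine ((((hasDerivAt_id x).div_const π).mul hlog).add
    ((hasDerivAt_lobachevsky hx).div_const π)).congr_deriv ?_
  rw [cot_eq_cos_div_sin, id]
  field_simp
  ring

lemma hasDerivAt_cot {x : ℝ} (hx : sin x ≠ 0) : HasDerivAt cot (-1 / sin x ^ 2) x := by
  have hcot : cot = fun y => cos y / sin y := funext cot_eq_cos_div_sin
  rw [hcot]
  refine ((hasDerivAt_cos x).div (hasDerivAt_sin x) hx).congr_deriv ?_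
  field_simp
  linear_combination -sin_sq_add_cos_sq x

lemma cot_pi_div_two_sub (x : ℝ) : cot (π / 2 - x) = tan x := by
  rw [cot_eq_cos_div_sin, cos_pi_div_two_sub, sin_pi_div_two_sub, tan_eq_sin_div_cos]

noncomputable def mIsoF0Deriv (θ : ℝ) : ℝ :=
  4 * θ / π * cot θ + (4 * θ - 2 * π) / π * tan θ

lemma hasDerivAt_mIsoF0 {x : ℝ} (hs : sin x ≠ 0) (hc : cos x ≠ 0) :
    HasDerivAt mIsoF0 (mIsoF0Deriv x) x := by
  have hs' : sin (π / 2 - x) ≠ 0 := by rwa [sin_pi_div_two_sub]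
  have hflip := (hasDerivAt_edgeContribution hs').comp x ((hasDerivAt_id x).const_sub (π / 2))
  refine (((hasDerivAt_edgeContribution hs).const_mul 4).add (hflip.const_mul 4)).congr_deriv ?_
  rw [mIsoF0Deriv, cot_pi_div_two_sub]
  ring

lemma hasDerivAt_mIsoF0Deriv {x : ℝ} (hs : sin x ≠ 0) (hc : cos x ≠ 0) :
    HasDerivAt mIsoF0Deriv
      (4 / π * cot x - 4 * x / π / sin x ^ 2 + 4 / π * tan x + (4 * x - 2 * π) / π / cos x ^ 2)
      x := by
  have hcot := (((hasDerivAt_id x).const_mul 4).div_const π).mul (hasDerivAt_cot hs)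
  have htan := ((((hasDerivAt_id x).const_mul 4).sub_const (2 * π)).div_const π).mul
    (hasDerivAt_tan hc)
  refine (hcot.add htan).congr_deriv ?_
  simp only [id]
  ring

lemma sin_sq_pi_div_four : sin (π / 4) ^ 2 = 1 / 2 := by
  rw [sin_pi_div_four, div_pow, sq_sqrt zero_le_two]; norm_num

lemma cos_sq_pi_div_four : cos (π / 4) ^ 2 = 1 / 2 := by
  rw [cos_pi_div_four, div_pow, sq_sqrt zero_le_two]; norm_num

lemma cot_pi_div_four : cot (π / 4) = 1 := by
  rw [cot_eq_cos_div_sin, cos_pi_div_four, sin_pi_div_four, div_self]; positivity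

lemma mIsoF0Deriv_pi_div_four : mIsoF0Deriv (π / 4) = 0 := by
  rw [mIsoF0Deriv, cot_pi_div_four, tan_pi_div_four]; ring

lemma hasDerivAt_mIsoF0Deriv_pi_div_four : HasDerivAt mIsoF0Deriv (8 / π - 4) (π / 4) := by
  have hs : sin (π / 4) ≠ 0 := by rw [sin_pi_div_four]; positivity
  have hc : cos (π / 4) ≠ 0 := by rw [cos_pi_div_four]; positivity
  convert hasDerivAt_mIsoF0Deriv hs hc using 1
  rw [sin_sq_pi_div_four, cos_sq_pi_div_four, cot_pi_div_four, tan_pi_div_four]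
  field_simp
  ring

section SecondDerivativeTest

variable {f : ℝ → ℝ} {x₀ : ℝ}

lemma lt_of_deriv_pos_Ico {y : ℝ} (hc : ContinuousAt f x₀) (hy : y < x₀)
    (hpos : ∀ z ∈ Ico y x₀, 0 < deriv f z) : f y < f x₀ := by
  have hcont : ContinuousOn f (Icc y x₀) := fun z hz => by
    rcases eq_or_lt_of_le hz.2 with rfl | hz₀
    · exact hc.continuousWithinAt
    · exact (differentiableAt_of_deriv_ne_zero (hpos z ⟨hz.1, hz₀⟩).ne').continuousAt
        |>.continuousWithinAt
  refine strictMonoOn_of_deriv_pos (convex_Icc y x₀) hcont (fun z hz => hpos z ?_)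
    (left_mem_Icc.2 hy.le) (right_mem_Icc.2 hy.le) hy
  rw [interior_Icc] at hz
  exact Ioo_subset_Ico_self hz

lemma lt_of_deriv_neg_Ioc {y : ℝ} (hc : ContinuousAt f x₀) (hy : x₀ < y)
    (hneg : ∀ z ∈ Ioc x₀ y, deriv f z < 0) : f y < f x₀ := by
  have hcont : ContinuousOn f (Icc x₀ y) := fun z hz => by
    rcases eq_or_lt_of_le hz.1 with rfl | hz₀
    · exact hc.continuousWithinAt
    · exact (differentiableAt_of_deriv_ne_zero (hneg z ⟨hz₀, hz.2⟩).ne).continuousAt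
        |>.continuousWithinAt
  refine strictAntiOn_of_deriv_neg (convex_Icc x₀ y) hcont (fun z hz => hneg z ?_)
    (left_mem_Icc.2 hy.le) (right_mem_Icc.2 hy.le) hy
  rw [interior_Icc] at hz
  exact Ioo_subset_Ioc_self hz

/-- Strict form of `isLocalMax_of_deriv_deriv_neg`. -/
theorem eventually_lt_of_deriv_deriv_neg (hf : deriv (deriv f) x₀ < 0) (hd : deriv f x₀ = 0)
    (hc : ContinuousAt f x₀) : ∀ᶠ x in 𝓝[≠] x₀, f x < f x₀ := by
  obtain ⟨a, b, ⟨ha, hb⟩, hsign⟩ :=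
    mem_nhds_iff_exists_Ioo_subset.1 (eventually_nhdsWithin_sign_eq_of_deriv_neg hf hd)
  filter_upwards [nhdsWithin_le_nhds (Ioo_mem_nhds ha hb), self_mem_nhdsWithin] with y hy hne
  rcases lt_or_gt_of_ne hne with hlt | hgt
  · refine lt_of_deriv_pos_Ico hc hlt fun z hz => ?_
    have : SignType.sign (deriv f z) = SignType.sign (x₀ - z) :=
      hsign ⟨hy.1.trans_le hz.1, hz.2.trans hb⟩
    rwa [sign_pos (sub_pos.2 hz.2), sign_eq_one_iff] at this
  · refine lt_of_deriv_neg_Ioc hc hgt fun z hz => ?_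
    have : SignType.sign (deriv f z) = SignType.sign (x₀ - z) :=
      hsign ⟨ha.trans hz.1, hz.2.trans_lt hy.2⟩
    rwa [sign_neg (sub_neg.2 hz.1), sign_eq_neg_one_iff] at this

end SecondDerivativeTest

/-- `m_iso` has a critical point at `θ₁ = π/4`, with second derivative
`8/π − 4 < 0` there; hence `π/4` is a strict local maximum. -/
theorem mIsoF0_max_at_pi_div_four :
    HasDerivAt mIsoF0 0 (Real.pi / 4) ∧
    HasDerivAt (deriv mIsoF0) (8 / Real.pi - 4) (Real.pi / 4) ∧
    (8 / Real.pi - 4 < 0) ∧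
    (∀ᶠ θ in nhdsWithin (Real.pi / 4) {Real.pi / 4}ᶜ,
      mIsoF0 θ < mIsoF0 (Real.pi / 4)) := by
  have hmem : π / 4 ∈ Ioo 0 (π / 2) := ⟨by positivity, by linarith [pi_pos]⟩
  have hderiv : ∀ x ∈ Ioo 0 (π / 2), HasDerivAt mIsoF0 (mIsoF0Deriv x) x := fun x hx =>
    hasDerivAt_mIsoF0 (sin_pos_of_pos_of_lt_pi hx.1 (by linarith [hx.2, pi_pos])).ne'
      (cos_pos_of_mem_Ioo ⟨by linarith [hx.1, pi_pos], hx.2⟩).ne'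
  have hfirst : HasDerivAt mIsoF0 0 (π / 4) := mIsoF0Deriv_pi_div_four ▸ hderiv _ hmem
  have hsecond : HasDerivAt (deriv mIsoF0) (8 / π - 4) (π / 4) :=
    hasDerivAt_mIsoF0Deriv_pi_div_four.congr_of_eventuallyEq <|
      eventually_of_mem (isOpen_Ioo.mem_nhds hmem) fun x hx => (hderiv x hx).deriv
  have hneg : 8 / π - 4 < 0 := by
    rw [sub_neg, div_lt_iff₀ pi_pos]
    linarith [pi_gt_three]
  exact ⟨hfirst, hsecond, hneg,
    eventually_lt_of_deriv_deriv_neg (hsecond.deriv ▸ hneg) hfirst.deriv hfirst.continuousAt⟩
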